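/- Let n₁ ≤ n₂ be integers and for each i ∈ [n₁, n₂] let wᵢ : X → [0,∞] and gᵢ : X → X describe a weighted deterministic step. Define the loop kernel L(x) inductively: L(x) = δ_x if n₁ > n₂, and otherwise L(x)(U) = ∫ (w_{n₁}(x)·δ_{g_{n₁}(x)})(dy) · L'(y)(U) where L' is the loop kernel for the range [n₁+1, n₂]. Then L(x) = (∏_{i=n₁}^{n₂} w_i(x_i)) · δ_{x_{n₂+1}}, where x_{n₁} = x and x_{i+1} = g_i(x_i). -/

import Mathlib

open MeasureTheory

/-- Loop kernel: sequentially run weighted deterministic steps. -/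
noncomputable def loopMeas {X : Type*} [MeasurableSpace X] :
    List ((X → ENNReal) × (X → X)) → X → Set X → ENNReal
  | [], x, U => Measure.dirac x U
  | (w, g) :: rest, x, U => ∫⁻ y, loopMeas rest y U ∂(w x • Measure.dirac (g x))

/-- Iterated state transition of the loop. -/
def iterState {X : Type*} : List ((X → ENNReal) × (X → X)) → X → X
  | [], x => x
  | (_, g) :: rest, x => iterState rest (g x)

/-- Product of per-iteration scores along the trajectory. -/
noncomputable def prodW {X : Type*} : List ((X → ENNReal) × (X → X)) → X → ENNReal
  | [], _ => 1
  | (w, g) :: rest, x => w x * prodW rest (g x)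

theorem lintegral_smul_dirac {α : Type*} [MeasurableSpace α] {f : α → ENNReal}
    (hf : Measurable f) (c : ENNReal) (a : α) :
    ∫⁻ y, f y ∂(c • Measure.dirac a) = c * f a := by
  rw [lintegral_smul_measure, lintegral_dirac' a hf, smul_eq_mul]

section

variable {X : Type*} [MeasurableSpace X] {steps : List ((X → ENNReal) × (X → X))}

theorem measurable_iterState (hg : ∀ p ∈ steps, Measurable p.2) :
    Measurable (iterState steps) := by
  induction steps with
  | nil => exact measurable_id
  | cons p rest ih =>
    obtain ⟨w, g⟩ := p
    rw [List.forall_mem_cons] at hg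
    exact (ih hg.2).comp hg.1

theorem measurable_prodW (hw : ∀ p ∈ steps, Measurable p.1)
    (hg : ∀ p ∈ steps, Measurable p.2) : Measurable (prodW steps) := by
  induction steps with
  | nil => exact measurable_const
  | cons p rest ih =>
    obtain ⟨w, g⟩ := p
    rw [List.forall_mem_cons] at hw hg
    exact hw.1.mul ((ih hw.2 hg.2).comp hg.1)

end

theorem loop_compilation_correct {X : Type*} [MeasurableSpace X]
    (steps : List ((X → ENNReal) × (X → X)))
    (hw : ∀ p ∈ steps, Measurable p.1) (hg : ∀ p ∈ steps, Measurable p.2)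
    (x : X) (U : Set X) (hU : MeasurableSet U) :
    loopMeas steps x U = prodW steps x * Measure.dirac (iterState steps x) U := by
  induction steps generalizing x with
  | nil => simp [loopMeas, prodW, iterState]
  | cons p rest ih =>
    obtain ⟨w, g⟩ := p
    rw [List.forall_mem_cons] at hw hg
    have h_rest : Measurable fun y => prodW rest y * Measure.dirac (iterState rest y) U :=
      (measurable_prodW hw.2 hg.2).mul
        ((Measure.measurable_coe hU).comp (Measure.measurable_dirac.comp (measurable_iterState hg.2)))
    calc loopMeas ((w, g) :: rest) x U
        = ∫⁻ y, prodW rest y * Measure.dirac (iterState rest y) U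
            ∂(w x • Measure.dirac (g x)) := by
          simp only [loopMeas, ih hw.2 hg.2]
      _ = prodW ((w, g) :: rest) x * Measure.dirac (iterState ((w, g) :: rest) x) U := by
          rw [lintegral_smul_dirac h_rest, prodW, iterState, mul_assoc]
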